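/- arXiv:2204.12563 — 6 statements merged into one kernel-verified Lean document; each statement's English description precedes it below -/
import Mathlib

section
/- Let N ∈ ℕ and let ι : ℂ → ℂ^{N×N} be analytic on the open ball B(0,R) with power series ι(λ) = Σ_{k≥0} ι_k λ^k on B(0,R), ι_0 invertible. Let z ∈ ℂ with z ≠ 0 and |1/z| < R, and let u = (u_j)_{j≥1} be a sequence of vectors in ℂ^N. Then the following are equivalent: (a) u_{j−1} = z·u_j for all j ≥ 2 and the series Σ_{j≥1} ι_j u_j converges with sum −z·ι_0·u_1; (b) u_j = z^{1−j}·u_1 for all j ≥ 1 and ι(1/z)·u_1 = 0. In particular, the inverse power operator 𝒜 has eigenvector u to eigenvalue z (with u ≠ 0) if and only if u_j = z^{1−j}u_1 with u_1 a nonzero vector in the kernel of ι(1/z). -/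
/-!
The recursion `u j = z • u (j + 1)` forces `u j = z⁻¹ ^ j • u 0`. Then `∑ ιc (j + 1) *ᵥ u j` is
`z` times the tail `∑_{k ≥ 1} z⁻¹ ^ k • ιc k *ᵥ u 0` of the pencil series at `z⁻¹`, whose sum is
`ιf z⁻¹ *ᵥ u 0 - ιc 0 *ᵥ u 0`; so the sum condition says exactly `ιf z⁻¹ *ᵥ u 0 = 0`.
-/

open Matrix

theorem HasSum.matrix_mulVec {ι m n R : Type*} [Fintype n] [NonUnitalNonAssocSemiring R]
    [TopologicalSpace R] [IsTopologicalSemiring R] {f : ι → Matrix m n R} {A : Matrix m n R}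
    (hf : HasSum f A) (v : n → R) : HasSum (fun i => f i *ᵥ v) (A *ᵥ v) :=
  hf.map (mulVec.addMonoidHomLeft v) (continuous_id.matrix_mulVec continuous_const)

theorem hasSum_const_smul_iff₀ {ι G E : Type*} [GroupWithZero G] [AddCommMonoid E]
    [TopologicalSpace E] [DistribMulAction G E] [ContinuousConstSMul G E] {c : G} (hc : c ≠ 0)
    {f : ι → E} {a : E} : HasSum (fun i => c • f i) (c • a) ↔ HasSum f a :=
  ⟨fun h => by simpa only [inv_smul_smul₀ hc] using h.const_smul c⁻¹, fun h => h.const_smul c⟩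

theorem HasSum.hasSum_succ_iff {E : Type*} [AddCommGroup E] [TopologicalSpace E]
    [IsTopologicalAddGroup E] [T2Space E] {f : ℕ → E} {s : E} (hf : HasSum f s) {a : E} :
    HasSum (fun n => f (n + 1)) a ↔ a + f 0 = s := by
  rw [hasSum_nat_add_iff 1, Finset.sum_range_one]
  exact ⟨fun h => h.unique hf, fun h => h ▸ hf⟩

theorem forall_eq_smul_succ_iff_eq_inv_pow_smul {G M : Type*} [GroupWithZero G] [MulAction G M]
    {z : G} (hz : z ≠ 0) {u : ℕ → M} :
    (∀ j, u j = z • u (j + 1)) ↔ ∀ j, u j = z⁻¹ ^ j • u 0 := by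
  refine ⟨fun h j => ?_, fun h j => ?_⟩
  · induction j with
    | zero => simp
    | succ j ih => rw [pow_succ', mul_smul, ← ih, h j, inv_smul_smul₀ hz]
  · rw [h j, h (j + 1), pow_succ', mul_smul, smul_inv_smul₀ hz]

/-- The index is shifted: `u j` is the paper's `u_{j+1}`. -/
theorem invPower_eigenvector_iff_pencil_kernel_general
    (N : ℕ) (R : ℝ)
    (ιf : ℂ → Matrix (Fin N) (Fin N) ℂ) (ιc : ℕ → Matrix (Fin N) (Fin N) ℂ)
    (hser : ∀ z : ℂ, ‖z‖ < R → HasSum (fun k => z ^ k • ιc k) (ιf z))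
    (z : ℂ) (hz : z ≠ 0) (hzR : ‖z⁻¹‖ < R)
    (u : ℕ → Fin N → ℂ) :
    ((∀ j : ℕ, u j = z • u (j + 1)) ∧
        HasSum (fun j : ℕ => (ιc (j + 1)).mulVec (u j))
          (-(z • (ιc 0).mulVec (u 0))))
      ↔ ((∀ j : ℕ, u j = (z⁻¹) ^ j • u 0) ∧ (ιf z⁻¹).mulVec (u 0) = 0) := by
  have hpencil : HasSum (fun k => z⁻¹ ^ k • ιc k *ᵥ u 0) (ιf z⁻¹ *ᵥ u 0) := by
    simpa only [smul_mulVec] using (hser z⁻¹ hzR).matrix_mulVec (u 0)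
  rw [forall_eq_smul_succ_iff_eq_inv_pow_smul hz]
  refine and_congr_right fun hu => ?_
  have hterms : (fun j => ιc (j + 1) *ᵥ u j) =
      fun j => z • (z⁻¹ ^ (j + 1) • ιc (j + 1) *ᵥ u 0) := by
    funext j
    rw [hu j, mulVec_smul, pow_succ', mul_smul, smul_inv_smul₀ hz]
  rw [hterms, ← smul_neg, hasSum_const_smul_iff₀ hz, hpencil.hasSum_succ_iff, pow_zero,
    one_smul, neg_add_cancel, eq_comm]

/-- Linearization identity for the inverse power operator `𝒜` associated with a
nonlinear matrix pencil `ι(λ) = Σ_k ι_k λ^k`: a sequence `(u_j)_{j≥1}` (indexed here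
from `0`, so `u i` is the `(i+1)`-st component) satisfies the eigenvector equations
`u_{j−1} = z·u_j (j ≥ 2)` and `Σ_{j≥1} ι_j u_j = −z·ι_0·u_1` if and only if
`u_j = z^{1−j}·u_1` and `ι(1/z)·u_1 = 0`. -/
theorem invPower_eigenvector_iff_pencil_kernel
    (N : ℕ) (R : ℝ)
    (ιf : ℂ → Matrix (Fin N) (Fin N) ℂ) (ιc : ℕ → Matrix (Fin N) (Fin N) ℂ)
    (hser : ∀ z : ℂ, ‖z‖ < R → HasSum (fun k => z ^ k • ιc k) (ιf z))
    (hunit : IsUnit (ιc 0)) (hc0 : ιc 0 = ιf 0)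
    (z : ℂ) (hz : z ≠ 0) (hzR : ‖z⁻¹‖ < R)
    (u : ℕ → Fin N → ℂ) :
    ((∀ j : ℕ, u j = z • u (j + 1)) ∧
        HasSum (fun j : ℕ => (ιc (j + 1)).mulVec (u j))
          (-(z • (ιc 0).mulVec (u 0))))
      ↔ ((∀ j : ℕ, u j = (z⁻¹) ^ j • u 0) ∧ (ιf z⁻¹).mulVec (u 0) = 0) :=
  invPower_eigenvector_iff_pencil_kernel_general N R ιf ιc hser z hz hzR u
end

section
/- Let N ∈ ℕ, let ι_0 ∈ ℂ^{N×N} be invertible, let λ₀ ∈ ℂ with λ₀ ≠ 0, and let j ∈ ℕ. Suppose ι is a matrix-valued function, defined and invertible on a punctured neighborhood of λ₀, such that the function λ ↦ ι(λ)^{-1} does not agree near λ₀ with any matrix-valued function analytic at λ₀. Then there exists f ∈ ℂ^N such that the function λ ↦ λ^j·(f − ι(λ)^{-1}·ι_0·f), defined on the punctured neighborhood, does not agree near λ₀ with any function analytic at λ₀. -/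
open Filter Topology

/-! If `λ^j (f - ι(λ)⁻¹ ι₀ f)` extended analytically to `λ₀` for every `f`, then, dividing by
`λ^j` (legitimate near `λ₀ ≠ 0`), every column `ι(λ)⁻¹ ι₀ eᵦ` would extend analytically, hence
so would `ι(λ)⁻¹ ι₀`, and multiplying on the right by `ι₀⁻¹` would extend `ι⁻¹`. -/

section

variable {𝕜 : Type*} [NontriviallyNormedField 𝕜]

theorem exists_analyticAt_eventuallyEq_of_pow_smul_sub {E : Type*} [NormedAddCommGroup E]
    [NormedSpace 𝕜 E] {z : 𝕜} (hz : z ≠ 0) {j : ℕ} {f : E} {h v : 𝕜 → E}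
    (hh : AnalyticAt 𝕜 h z) (hv : ∀ᶠ w in 𝓝[≠] z, h w = w ^ j • (f - v w)) :
    ∃ g : 𝕜 → E, AnalyticAt 𝕜 g z ∧ ∀ᶠ w in 𝓝[≠] z, g w = v w := by
  refine ⟨fun w => f - (w ^ j)⁻¹ • h w,
    analyticAt_const.sub (((analyticAt_id.pow j).inv (pow_ne_zero j hz)).smul hh), ?_⟩
  filter_upwards [hv, eventually_ne_nhdsWithin hz] with w hw hw0
  rw [hw, smul_smul, inv_mul_cancel₀ (pow_ne_zero j hw0), one_smul, sub_sub_cancel]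

namespace Matrix

variable {m n p : Type*}

theorem exists_analyticAt_apply_eventuallyEq_of_col [Fintype m] [Finite n]
    {G : 𝕜 → Matrix m n 𝕜} {z : 𝕜} {l : Filter 𝕜}
    (hcol : ∀ b, ∃ g : 𝕜 → m → 𝕜, AnalyticAt 𝕜 g z ∧ ∀ᶠ w in l, g w = (G w).col b) :
    ∃ M : 𝕜 → Matrix m n 𝕜,
      (∀ a b, AnalyticAt 𝕜 (fun w => M w a b) z) ∧ ∀ᶠ w in l, M w = G w := by
  choose g hg hgG using hcol
  refine ⟨fun w => of fun a b => g b w a, fun a b => analyticAt_pi_iff.1 (hg b) a, ?_⟩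
  filter_upwards [eventually_all.2 hgG] with w hw
  ext a b
  exact congrFun (hw b) a

theorem analyticAt_mul_const_apply [Fintype n] {M : 𝕜 → Matrix m n 𝕜} {z : 𝕜}
    (hM : ∀ a b, AnalyticAt 𝕜 (fun w => M w a b) z) (A : Matrix n p 𝕜) (a : m) (c : p) :
    AnalyticAt 𝕜 (fun w => (M w * A) a c) z := by
  simp only [mul_apply]
  exact Finset.analyticAt_fun_sum _ fun b _ => (hM a b).mul analyticAt_const

end Matrix

end

theorem pointwise_resolvent_inherits_singularity_general
    (N : ℕ) (ι₀ : Matrix (Fin N) (Fin N) ℂ) (hι₀ : IsUnit ι₀)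
    (μ₀ : ℂ) (hμ₀ : μ₀ ≠ 0) (j : ℕ)
    (ι : ℂ → Matrix (Fin N) (Fin N) ℂ)
    (hsing : ¬ ∃ g : ℂ → Matrix (Fin N) (Fin N) ℂ,
      (∀ a b : Fin N, AnalyticAt ℂ (fun w => g w a b) μ₀) ∧
      ∀ᶠ w in nhdsWithin μ₀ {μ₀}ᶜ, g w = (ι w)⁻¹) :
    ∃ f : Fin N → ℂ,
      ¬ ∃ h : ℂ → Fin N → ℂ,
        (∀ a : Fin N, AnalyticAt ℂ (fun w => h w a) μ₀) ∧
        ∀ᶠ w in nhdsWithin μ₀ {μ₀}ᶜ,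
          h w = w ^ j • (f - ((ι w)⁻¹).mulVec (ι₀.mulVec f)) := by
  by_contra! hext
  have hcol (b : Fin N) : ∃ g : ℂ → Fin N → ℂ,
      AnalyticAt ℂ g μ₀ ∧ ∀ᶠ w in 𝓝[≠] μ₀, g w = ((ι w)⁻¹ * ι₀).col b := by
    obtain ⟨h, hh, hhι⟩ := hext (Pi.single b 1)
    simp_rw [Matrix.mulVec_mulVec, Matrix.mulVec_single_one] at hhι
    exact exists_analyticAt_eventuallyEq_of_pow_smul_sub hμ₀ (analyticAt_pi_iff.2 hh) hhι
  obtain ⟨M, hM, hMι⟩ := Matrix.exists_analyticAt_apply_eventuallyEq_of_col hcol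
  refine hsing ⟨fun w => M w * ι₀⁻¹, Matrix.analyticAt_mul_const_apply hM ι₀⁻¹, ?_⟩
  filter_upwards [hMι] with w hw
  rw [hw, Matrix.mul_nonsing_inv_cancel_right _ _ ((Matrix.isUnit_iff_isUnit_det ι₀).mp hι₀)]

/-- The columns of the pointwise resolvent of the inverse power operator inherit
every singularity of `ι⁻¹`: if `λ ↦ ι(λ)⁻¹` does not extend analytically to `λ₀ ≠ 0`,
then for some vector `f` the function `λ ↦ λ^j·(f − ι(λ)⁻¹·ι₀·f)` does not extend
analytically to `λ₀` either. -/
theorem pointwise_resolvent_inherits_singularity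
    (N : ℕ) (ι₀ : Matrix (Fin N) (Fin N) ℂ) (hι₀ : IsUnit ι₀)
    (μ₀ : ℂ) (hμ₀ : μ₀ ≠ 0) (j : ℕ)
    (ι : ℂ → Matrix (Fin N) (Fin N) ℂ)
    (hinv : ∀ᶠ w in nhdsWithin μ₀ {μ₀}ᶜ, IsUnit (ι w))
    (hsing : ¬ ∃ g : ℂ → Matrix (Fin N) (Fin N) ℂ,
      (∀ a b : Fin N, AnalyticAt ℂ (fun w => g w a b) μ₀) ∧
      ∀ᶠ w in nhdsWithin μ₀ {μ₀}ᶜ, g w = (ι w)⁻¹) :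
    ∃ f : Fin N → ℂ,
      ¬ ∃ h : ℂ → Fin N → ℂ,
        (∀ a : Fin N, AnalyticAt ℂ (fun w => h w a) μ₀) ∧
        ∀ᶠ w in nhdsWithin μ₀ {μ₀}ᶜ,
          h w = w ^ j • (f - ((ι w)⁻¹).mulVec (ι₀.mulVec f)) :=
  pointwise_resolvent_inherits_singularity_general N ι₀ hι₀ μ₀ hμ₀ j ι hsing
end

section
/- Let N ∈ ℕ, λ_* ∈ ℂ, and let ι : ℂ → ℂ^{N×N} be analytic at λ_*. Let p ∈ ℕ and let u(λ) = Σ_{j=0}^p u_j (λ−λ_*)^j be a polynomial with values in ℂ^N such that u(λ_*) ≠ 0 and the analytic function λ ↦ ι(λ)·u(λ) vanishes at λ_* to order at least s (i.e., its derivatives of order 0,…,s−1 at λ_* all vanish). Then the analytic function λ ↦ det ι(λ) vanishes at λ_* to order at least s. -/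
/-!
Multiplying `ι u` by the adjugate of `ι` gives `(det ι) • u`. Multiplication by an analytic
matrix cannot lower the order of vanishing, and orders add under scalar multiplication, where
`u` contributes order `0` because `u(λ_*) ≠ 0`. Hence `ord det ι ≥ ord (ι u) ≥ s`.
-/

open Matrix

section MatrixAnalytic

variable {𝕜 : Type*} [NontriviallyNormedField 𝕜] {m n : Type*} [Fintype n] {z₀ : 𝕜}

theorem AnalyticAt.matrix_det [DecidableEq n] {A : 𝕜 → Matrix n n 𝕜}
    (hA : ∀ i j, AnalyticAt 𝕜 (fun z => A z i j) z₀) :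
    AnalyticAt 𝕜 (fun z => (A z).det) z₀ := by
  simp only [det_apply']
  exact Finset.analyticAt_fun_sum _ fun σ _ =>
    analyticAt_const.mul (Finset.analyticAt_fun_prod _ fun i _ => hA (σ i) i)

theorem AnalyticAt.matrix_adjugate [DecidableEq n] {A : 𝕜 → Matrix n n 𝕜}
    (hA : ∀ i j, AnalyticAt 𝕜 (fun z => A z i j) z₀) (i j : n) :
    AnalyticAt 𝕜 (fun z => adjugate (A z) i j) z₀ := by
  simp only [adjugate_apply]
  refine AnalyticAt.matrix_det fun k l => ?_
  by_cases hk : k = j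
  · simp only [hk, updateRow_self]
    exact analyticAt_const
  · simpa only [updateRow_ne hk] using hA k l

theorem AnalyticAt.matrix_mulVec [Fintype m] {A : 𝕜 → Matrix m n 𝕜} {v : 𝕜 → n → 𝕜}
    (hA : ∀ i j, AnalyticAt 𝕜 (fun z => A z i j) z₀) (hv : AnalyticAt 𝕜 v z₀) :
    AnalyticAt 𝕜 (fun z => A z *ᵥ v z) z₀ :=
  analyticAt_pi_iff.mpr fun i => Finset.analyticAt_fun_sum _ fun j _ =>
    (hA i j).mul (analyticAt_pi_iff.mp hv j)

theorem le_analyticOrderAt_mulVec [Fintype m] {A : 𝕜 → Matrix m n 𝕜} {v : 𝕜 → n → 𝕜}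
    (hA : ∀ i j, AnalyticAt 𝕜 (fun z => A z i j) z₀) :
    analyticOrderAt v z₀ ≤ analyticOrderAt (fun z => A z *ᵥ v z) z₀ := by
  by_cases hv : AnalyticAt 𝕜 v z₀
  swap
  · simp [analyticOrderAt_of_not_analyticAt hv]
  refine ENat.forall_natCast_le_iff_le.mp fun k => ?_
  rw [natCast_le_analyticOrderAt hv, natCast_le_analyticOrderAt (hv.matrix_mulVec hA)]
  rintro ⟨g, hg, hvg⟩
  refine ⟨fun z => A z *ᵥ g z, hg.matrix_mulVec hA, ?_⟩
  filter_upwards [hvg] with z hz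
  rw [hz, mulVec_smul]

end MatrixAnalytic

/-- A root function controls the order of vanishing of the Evans function: if `ι` is
analytic at `μ_*`, `u(μ) = Σ_{j=0}^p u_j (μ−μ_*)^j` is a polynomial with `u(μ_*) ≠ 0`,
and `μ ↦ ι(μ)·u(μ)` vanishes at `μ_*` to order at least `s`, then `μ ↦ det ι(μ)`
vanishes at `μ_*` to order at least `s`. -/
theorem root_function_det_vanishing
    (N : ℕ) (μstar : ℂ) (ι : ℂ → Matrix (Fin N) (Fin N) ℂ)
    (hι : ∀ a b : Fin N, AnalyticAt ℂ (fun w => ι w a b) μstar)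
    (p s : ℕ) (uc : ℕ → Fin N → ℂ)
    (hne : (∑ j ∈ Finset.range (p + 1), (μstar - μstar) ^ j • uc j) ≠ 0)
    (hroot : ∀ n < s,
      iteratedDeriv n
        (fun w : ℂ => (ι w).mulVec (∑ j ∈ Finset.range (p + 1), (w - μstar) ^ j • uc j))
        μstar = 0) :
    ∀ n < s, iteratedDeriv n (fun w : ℂ => (ι w).det) μstar = 0 := by
  set u : ℂ → Fin N → ℂ := fun w => ∑ j ∈ Finset.range (p + 1), (w - μstar) ^ j • uc j
  have hu : AnalyticAt ℂ u μstar := by fun_prop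
  have hdet : AnalyticAt ℂ (fun w => (ι w).det) μstar := .matrix_det hι
  have hu_order : analyticOrderAt u μstar = 0 := hu.analyticOrderAt_eq_zero.mpr hne
  have hadj : (fun w => adjugate (ι w) *ᵥ (ι w *ᵥ u w)) = fun w => (ι w).det • u w := by
    funext w
    rw [mulVec_mulVec, adjugate_mul, smul_mulVec, one_mulVec]
  rw [← natCast_le_analyticOrderAt_iff_iteratedDeriv_eq_zero hdet]
  calc (s : ℕ∞) ≤ analyticOrderAt (fun w => ι w *ᵥ u w) μstar :=
        (natCast_le_analyticOrderAt_iff_iteratedDeriv_eq_zero (hu.matrix_mulVec hι)).mpr hroot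
    _ ≤ analyticOrderAt (fun w => adjugate (ι w) *ᵥ (ι w *ᵥ u w)) μstar :=
        le_analyticOrderAt_mulVec (AnalyticAt.matrix_adjugate hι)
    _ = analyticOrderAt (fun w => (ι w).det) μstar + analyticOrderAt u μstar := by
        rw [hadj]; exact analyticOrderAt_smul hdet hu
    _ = analyticOrderAt (fun w => (ι w).det) μstar := by rw [hu_order, add_zero]
end

section
/- Let ε ∈ ℝ with 0 < ε² < 1/12 and set c = (1/9)·√((6 − 6·√(1−12ε²))/ε²)·(√(1−12ε²) + 2). Then the dispersion relation of the linearized extended Fisher–KPP equation at speed c has a double root at λ = 0: there exists ν ∈ ℂ such that −ε²·ν⁴ + ν² + c·ν + 1 = 0 and −4ε²·ν³ + 2ν + c = 0. -/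
/-!
Eliminating `c` between `d_c(ν) = 0` and `d_c'(ν) = 0` via `c = 4ε²ν³ − 2ν` leaves
`3ε²ν⁴ − ν² + 1 = 0`, a quadratic in `ν²` with roots `ν² = (1 ± √(1 − 12ε²)) / (6ε²)`.
The branch point is `ν = −r` with `r² = (1 − √(1 − 12ε²)) / (6ε²)`, and the corresponding
speed `4ε²ν³ − 2ν = (2/3) r (√(1 − 12ε²) + 2)` is the displayed `c`.
-/

theorem dispersion_eq_zero_and_deriv_eq_zero {R : Type*} [CommRing R] {e ν c : R}
    (hν : 3 * e * ν ^ 4 - ν ^ 2 + 1 = 0) (hc : c = 4 * e * ν ^ 3 - 2 * ν) :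
    -e * ν ^ 4 + ν ^ 2 + c * ν + 1 = 0 ∧ -4 * e * ν ^ 3 + 2 * ν + c = 0 :=
  ⟨by linear_combination hν + ν * hc, by linear_combination hc⟩

theorem three_mul_sq_sub_add_one_eq_zero {K : Type*} [Field K] [CharZero K] {e s x : K}
    (he : e ≠ 0) (hs : s ^ 2 = 1 - 12 * e) (hx : 6 * e * x = 1 - s) :
    3 * e * x ^ 2 - x + 1 = 0 := by
  have h : 12 * e * (3 * e * x ^ 2 - x + 1) = 0 := by
    linear_combination (6 * e * x - 1 - s) * hx + hs
  exact (mul_eq_zero.mp h).resolve_left (mul_ne_zero (by norm_num) he)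

theorem Real.sqrt_six_sub_six_mul_div {e : ℝ} (he : e ≠ 0) (s : ℝ) :
    √((6 - 6 * s) / e) = 6 * √((1 - s) / (6 * e)) := by
  have h : (6 - 6 * s) / e = 6 ^ 2 * ((1 - s) / (6 * e)) := by
    field_simp
  rw [h, Real.sqrt_mul (by positivity), Real.sqrt_sq (by norm_num)]

/-- At the linear spreading speed `c_lin` of the extended Fisher–KPP equation
`w_t = −ε²w_{xxxx} + w_{xx} + w − w³`, the dispersion relation
`λ = −ε²ν⁴ + ν² + cν + 1` of the linearization in the comoving frame has a double
root at `λ = 0`. -/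
theorem extended_fisher_kpp_double_root_at_zero
    (ε : ℝ) (hε0 : 0 < ε ^ 2) (hε : ε ^ 2 < 1 / 12)
    (c : ℝ)
    (hc : c = (1 / 9) * Real.sqrt ((6 - 6 * Real.sqrt (1 - 12 * ε ^ 2)) / ε ^ 2) *
        (Real.sqrt (1 - 12 * ε ^ 2) + 2)) :
    ∃ ν : ℂ,
      -(ε : ℂ) ^ 2 * ν ^ 4 + ν ^ 2 + (c : ℂ) * ν + 1 = 0 ∧
      -4 * (ε : ℂ) ^ 2 * ν ^ 3 + 2 * ν + (c : ℂ) = 0 := by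
  set s := √(1 - 12 * ε ^ 2)
  set r := √((1 - s) / (6 * ε ^ 2))
  have hs : s ^ 2 = 1 - 12 * ε ^ 2 := Real.sq_sqrt (by linarith)
  have hs1 : s ≤ 1 := Real.sqrt_le_one.mpr (by linarith)
  have hr : 6 * ε ^ 2 * r ^ 2 = 1 - s := by
    rw [Real.sq_sqrt (div_nonneg (by linarith) (by positivity))]
    exact mul_div_cancel₀ _ (by positivity)
  have hquartic : 3 * ε ^ 2 * (-r) ^ 4 - (-r) ^ 2 + 1 = 0 := by
    linear_combination three_mul_sq_sub_add_one_eq_zero hε0.ne' hs hr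
  have hspeed : c = 4 * ε ^ 2 * (-r) ^ 3 - 2 * (-r) := by
    rw [hc, Real.sqrt_six_sub_six_mul_div hε0.ne']
    linear_combination (2 / 3 * r) * hr
  refine ⟨((-r : ℝ) : ℂ), ?_⟩
  exact_mod_cast dispersion_eq_zero_and_deriv_eq_zero hquartic hspeed
end

section
/- The function u : ℝ × ℝ → ℝ defined by u(x,y) = cos(y/2)/cosh(x/2) is smooth, not identically zero, satisfies the partial differential equation ∂²u/∂x² + ∂²u/∂y² + (1/2)·(1/cosh(x/2))²·u = 0 at every point (x,y) ∈ ℝ × (−π,π), and satisfies the Dirichlet boundary conditions u(x,π) = u(x,−π) = 0 for every x ∈ ℝ. In particular, λ = 0 is an eigenvalue of the Schrödinger operator w ↦ Δw + (1/2)sech²(x/2)·w on the strip ℝ × (−π,π) with Dirichlet boundary conditions. -/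
open Real

lemma hd_half (x : ℝ) : HasDerivAt (fun s : ℝ => s / 2) (1/2) x := by
  simpa using (hasDerivAt_id x).div_const 2

lemma dx1 (c x : ℝ) :
    HasDerivAt (fun s : ℝ => c / Real.cosh (s / 2))
      (-(c * Real.sinh (x/2) * (1/2)) / (Real.cosh (x/2))^2) x := by
  have h2 : HasDerivAt (fun s : ℝ => Real.cosh (s/2)) (Real.sinh (x/2) * (1/2)) x := by
    have := (Real.hasDerivAt_cosh (x/2)).comp x (hd_half x); exact this
  have h3 := (hasDerivAt_const x c).div h2 ((Real.cosh_pos _).ne')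
  refine h3.congr_deriv ?_
  ring

lemma deriv_x1 (c : ℝ) :
    (deriv fun s : ℝ => c / Real.cosh (s / 2)) =
      fun x => -(c * Real.sinh (x/2) * (1/2)) / (Real.cosh (x/2))^2 := by
  funext x; exact (dx1 c x).deriv

lemma dx2 (c x : ℝ) :
    deriv (deriv fun s : ℝ => c / Real.cosh (s / 2)) x =
      c * (Real.sinh (x/2)^2 / 2 - Real.cosh (x/2)^2 / 4) / (Real.cosh (x/2))^3 := by
  rw [deriv_x1]
  have h2 : HasDerivAt (fun s : ℝ => Real.cosh (s/2)) (Real.sinh (x/2) * (1/2)) x := by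
    have := (Real.hasDerivAt_cosh (x/2)).comp x (hd_half x); exact this
  have hs : HasDerivAt (fun s : ℝ => Real.sinh (s/2)) (Real.cosh (x/2) * (1/2)) x := by
    have := (Real.hasDerivAt_sinh (x/2)).comp x (hd_half x); exact this
  have hnum : HasDerivAt (fun s : ℝ => -(c * Real.sinh (s/2) * (1/2)))
      (-(c * (Real.cosh (x/2) * (1/2)) * (1/2))) x := by
    simpa [Pi.neg_def, mul_comm, mul_assoc, mul_left_comm] using ((hs.const_mul c).mul_const (1/2)).neg
  have hden : HasDerivAt (fun s : ℝ => (Real.cosh (s/2))^2)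
      (2 * Real.cosh (x/2) * (Real.sinh (x/2) * (1/2))) x := by
    simpa [Pi.pow_def, pow_one, mul_comm, mul_assoc, mul_left_comm] using h2.pow 2
  have h := (hnum.div hden (by positivity)).deriv
  simp only [Pi.div_def] at h
  rw [h]
  have hc : Real.cosh (x/2) ≠ 0 := (Real.cosh_pos _).ne'
  field_simp
  ring

lemma dy2 (k y : ℝ) :
    deriv (deriv fun t : ℝ => Real.cos (t / 2) / k) y =
      -(Real.cos (y/2) / 4) / k := by
  have d1 : (deriv fun t : ℝ => Real.cos (t / 2) / k) =
      fun t => -(Real.sin (t/2) * (1/2)) / k := by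
    funext t
    have : HasDerivAt (fun t : ℝ => Real.cos (t/2) / k)
        (-(Real.sin (t/2) * (1/2)) / k) t := by
      have := ((Real.hasDerivAt_cos (t/2)).comp t (hd_half t)).div_const k
      simpa [neg_mul] using this
    exact this.deriv
  rw [d1]
  have : HasDerivAt (fun t : ℝ => -(Real.sin (t/2) * (1/2)) / k)
      (-(Real.cos (y/2) / 4) / k) y := by
    have := (((Real.hasDerivAt_sin (y/2)).comp y (hd_half y)).mul_const (1/2)).neg.div_const k
    refine this.congr_deriv ?_; ring
  exact this.deriv

/-- `u(x,y) = cos(y/2)/cosh(x/2)` is a smooth, nontrivial solution of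
`u_xx + u_yy + (1/2) sech²(x/2) u = 0` on the strip `ℝ × (−π,π)` with Dirichlet
boundary conditions at `y = ±π`: `λ = 0` is an eigenvalue of the Schrödinger
operator `w ↦ Δw + (1/2) sech²(x/2) w` on the strip. -/
theorem schroedinger_strip_eigenvalue_zero :
    ContDiff ℝ (⊤ : ℕ∞) (fun p : ℝ × ℝ => Real.cos (p.2 / 2) / Real.cosh (p.1 / 2)) ∧
    (fun p : ℝ × ℝ => Real.cos (p.2 / 2) / Real.cosh (p.1 / 2)) ≠ 0 ∧
    (∀ x y : ℝ, y ∈ Set.Ioo (-Real.pi) Real.pi →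
      deriv (deriv fun s : ℝ => Real.cos (y / 2) / Real.cosh (s / 2)) x +
        deriv (deriv fun t : ℝ => Real.cos (t / 2) / Real.cosh (x / 2)) y +
        (1 / 2) * (1 / Real.cosh (x / 2)) ^ 2 *
          (Real.cos (y / 2) / Real.cosh (x / 2)) = 0) ∧
    (∀ x : ℝ, Real.cos (Real.pi / 2) / Real.cosh (x / 2) = 0 ∧
      Real.cos (-Real.pi / 2) / Real.cosh (x / 2) = 0) := by
  refine ⟨?_, ?_, ?_, ?_⟩
  · exact (Real.contDiff_cos.comp (contDiff_snd.div_const 2)).div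
      (Real.contDiff_cosh.comp (contDiff_fst.div_const 2)) (fun p => (Real.cosh_pos _).ne')
  · intro h
    have := congrFun h (0, 0)
    simp at this
  · intro x y _
    rw [dx2, dy2]
    have hc : Real.cosh (x/2) ≠ 0 := (Real.cosh_pos _).ne'
    have hid : Real.cosh (x/2)^2 - Real.sinh (x/2)^2 = 1 := Real.cosh_sq_sub_sinh_sq _
    field_simp
    linear_combination (-4 * Real.cos (y/2)) * hid
  · intro x
    simp [Real.cos_pi_div_two, neg_div, Real.cos_neg]
end

section
/- Let N ∈ ℕ, λ₀ ∈ ℂ with λ₀ ≠ 0, α > 0 a real number, w ∈ ℂ^N with w ≠ 0, and let u : ℕ → ℂ^N be a sequence such that k·‖λ₀^k·k^α·u_k − w‖ → 0 as k → ∞. Then ⟨u_{k+1}, u_k⟩ ≠ 0 for all sufficiently large k, and k·(⟨u_k,u_k⟩/⟨u_{k+1},u_k⟩ − λ₀) → α·λ₀ as k → ∞, where ⟨·,·⟩ is the standard Hermitian inner product on ℂ^N. -/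
/-!
Rescale to `v k = (k ^ α * μ₀ ^ k) • u k`, so that `v k = w + o(1/k)`. Scaling the two arguments of
`⟨x, x⟩ / ⟨y, x⟩` by `c` and `d` multiplies it by `c / d`, whence
`λ_{0,k} = μ₀ (1 + 1/k) ^ α · ⟨v_k, v_k⟩ / ⟨v_{k+1}, v_k⟩`. The last factor is a function of
`(v_k, v_{k+1})` that is differentiable at `(w, w)`, where it equals `1`, so it is `1 + o(1/k)`;
and `(1 + 1/k) ^ α = 1 + α/k + o(1/k)` because `x ↦ x ^ α` has derivative `α` at `1`.
-/

open Filter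

/-- The standard Hermitian inner product on `ℂ^N` (linear in the first argument,
conjugate-linear in the second). -/
noncomputable def hinner {N : ℕ} (x y : Fin N → ℂ) : ℂ :=
  ∑ i, x i * (starRingEnd ℂ) (y i)

open Topology Asymptotics

section Rates

variable {E : Type*} [SeminormedAddCommGroup E]

theorem isLittleO_natCast_inv_iff {f : ℕ → E} :
    f =o[atTop] (fun k : ℕ => (k : ℝ)⁻¹) ↔ Tendsto (fun k : ℕ => (k : ℝ) * ‖f k‖) atTop (𝓝 0) := by
  rw [← isLittleO_norm_left, isLittleO_iff_tendsto']
  · simp only [div_inv_eq_mul, mul_comm]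
  · filter_upwards [eventually_ne_atTop 0] with k hk hk'
    exact absurd (by simpa using hk') hk

theorem Asymptotics.IsLittleO.comp_add_one_natCast_inv {f : ℕ → E}
    (hf : f =o[atTop] fun k : ℕ => (k : ℝ)⁻¹) :
    (fun k => f (k + 1)) =o[atTop] fun k : ℕ => (k : ℝ)⁻¹ := by
  rw [isLittleO_natCast_inv_iff] at hf ⊢
  have hshift : Tendsto (fun k : ℕ => ((k : ℝ) + 1) * ‖f (k + 1)‖) atTop (𝓝 0) := by
    simpa [Function.comp_def] using hf.comp (tendsto_add_atTop_nat 1)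
  refine squeeze_zero (fun k => by positivity) (fun k => ?_) hshift
  gcongr
  linarith

theorem Asymptotics.IsLittleO.tendsto_natCast_mul {𝕜 : Type*} [RCLike 𝕜] {f : ℕ → 𝕜}
    (hf : f =o[atTop] fun k : ℕ => (k : ℝ)⁻¹) :
    Tendsto (fun k : ℕ => (k : 𝕜) * f k) atTop (𝓝 0) := by
  rw [tendsto_zero_iff_norm_tendsto_zero]
  simpa only [norm_mul, RCLike.norm_natCast] using isLittleO_natCast_inv_iff.1 hf

end Rates

theorem DifferentiableAt.isLittleO_comp_sub {𝕜 E F G α : Type*} [NontriviallyNormedField 𝕜]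
    [NormedAddCommGroup E] [NormedSpace 𝕜 E] [NormedAddCommGroup F] [NormedSpace 𝕜 F]
    [NormedAddCommGroup G] {f : E → F} {a : E} (hf : DifferentiableAt 𝕜 f a) {l : Filter α}
    {x : α → E} {g : α → G} (hx : (fun t => x t - a) =o[l] g) (hg : Tendsto g l (𝓝 0)) :
    (fun t => f (x t) - f a) =o[l] g := by
  have hxa : Tendsto x l (𝓝 a) := tendsto_sub_nhds_zero_iff.1 (hx.trans_tendsto hg)
  exact (hf.isBigO_sub.comp_tendsto hxa).trans_isLittleO hx

theorem HasDerivAt.tendsto_natCast_smul_sub {E : Type*} [NormedAddCommGroup E] [NormedSpace ℝ E]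
    {f : ℝ → E} {f' : E} {x : ℝ} (hf : HasDerivAt f f' x) :
    Tendsto (fun k : ℕ => (k : ℝ) • (f (x + (k : ℝ)⁻¹) - f x)) atTop (𝓝 f') := by
  have hpts : Tendsto (fun k : ℕ => x + (k : ℝ)⁻¹) atTop (𝓝[≠] x) := by
    refine tendsto_nhdsWithin_iff.2 ⟨?_, ?_⟩
    · simpa using tendsto_const_nhds (x := x).add (tendsto_inv_atTop_nhds_zero_nat (𝕜 := ℝ))
    · filter_upwards [eventually_ne_atTop 0] with k hk
      simpa using hk
  refine ((hasDerivAt_iff_tendsto_slope.1 hf).comp hpts).congr fun k => ?_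
  simp [slope_def_module]

theorem tendsto_natCast_mul_mul_sub_one {𝕜 : Type*} [RCLike 𝕜] {r q : ℕ → 𝕜} {a b : 𝕜}
    (hr : Tendsto (fun k : ℕ => (k : 𝕜) * (r k - 1)) atTop (𝓝 a))
    (hq : Tendsto (fun k : ℕ => (k : 𝕜) * (q k - 1)) atTop (𝓝 b)) :
    Tendsto (fun k : ℕ => (k : 𝕜) * (r k * q k - 1)) atTop (𝓝 (a + b)) := by
  have hq1 : Tendsto q atTop (𝓝 1) := by
    have h0 : Tendsto (fun k : ℕ => (k : 𝕜)⁻¹ * ((k : 𝕜) * (q k - 1))) atTop (𝓝 0) := by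
      simpa using tendsto_inv_atTop_nhds_zero_nat.mul hq
    refine tendsto_sub_nhds_zero_iff.1 (h0.congr' ?_)
    filter_upwards [eventually_ne_atTop 0] with k hk
    rw [inv_mul_cancel_left₀ (Nat.cast_ne_zero.2 hk)]
  simpa only [mul_one] using (hr.mul hq1).add hq |>.congr fun k => by ring

section ApproxSpectralValue

variable {N : ℕ}

theorem hinner_smul_smul (c d : ℂ) (x y : Fin N → ℂ) :
    hinner (c • x) (d • y) = c * starRingEnd ℂ d * hinner x y := by
  simp only [hinner, Finset.mul_sum, Pi.smul_apply, smul_eq_mul, map_mul]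
  exact Finset.sum_congr rfl fun i _ => by ring

theorem hinner_self_ne_zero {x : Fin N → ℂ} (hx : x ≠ 0) : hinner x x ≠ 0 := by
  have hsum : hinner x x = ((∑ i, Complex.normSq (x i) : ℝ) : ℂ) := by
    simp [hinner, Complex.mul_conj]
  obtain ⟨i, hi⟩ := Function.ne_iff.1 hx
  rw [hsum, Complex.ofReal_ne_zero]
  exact (Finset.sum_pos' (fun j _ => Complex.normSq_nonneg _)
    ⟨i, Finset.mem_univ i, Complex.normSq_pos.2 hi⟩).ne'

theorem continuous_hinner :
    Continuous fun p : (Fin N → ℂ) × (Fin N → ℂ) => hinner p.1 p.2 := by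
  unfold hinner
  fun_prop

/-- `λ_{0,k} = approxSpectralValue (u k) (u (k + 1))`. -/
noncomputable def approxSpectralValue (x y : Fin N → ℂ) : ℂ :=
  hinner x x / hinner y x

theorem approxSpectralValue_smul_smul (c d : ℂ) (x y : Fin N → ℂ) :
    approxSpectralValue (c • x) (d • y) = c / d * approxSpectralValue x y := by
  rcases eq_or_ne c 0 with rfl | hc
  · simp [approxSpectralValue, hinner]
  have hc' : starRingEnd ℂ c ≠ 0 := (map_ne_zero _).2 hc
  rw [approxSpectralValue, approxSpectralValue, hinner_smul_smul, hinner_smul_smul,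
    mul_div_mul_comm, mul_div_mul_right _ _ hc']

theorem approxSpectralValue_self {x : Fin N → ℂ} (hx : x ≠ 0) : approxSpectralValue x x = 1 :=
  div_self (hinner_self_ne_zero hx)

theorem differentiableAt_approxSpectralValue {x y : Fin N → ℂ} (h : hinner y x ≠ 0) :
    DifferentiableAt ℝ (fun p : (Fin N → ℂ) × (Fin N → ℂ) => approxSpectralValue p.1 p.2)
      (x, y) := by
  have hnum : DifferentiableAt ℝ (fun p : (Fin N → ℂ) × (Fin N → ℂ) => hinner p.1 p.1) (x, y) := by
    unfold hinner; fun_prop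
  have hden : DifferentiableAt ℝ (fun p : (Fin N → ℂ) × (Fin N → ℂ) => hinner p.2 p.1) (x, y) := by
    unfold hinner; fun_prop
  simpa only [approxSpectralValue, div_eq_mul_inv] using hnum.fun_mul (hden.fun_inv h)

end ApproxSpectralValue

theorem tendsto_natCast_mul_one_add_inv_rpow_sub_one (α : ℝ) :
    Tendsto (fun k : ℕ => (k : ℂ) * ((((1 + (k : ℝ)⁻¹) ^ α : ℝ) : ℂ) - 1)) atTop (𝓝 α) := by
  have hd := Real.hasDerivAt_rpow_const (x := 1) (p := α) (Or.inl one_ne_zero)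
  rw [Real.one_rpow, mul_one] at hd
  have h := (Complex.continuous_ofReal.tendsto _).comp hd.tendsto_natCast_smul_sub
  push_cast [Function.comp_def, smul_eq_mul, Real.one_rpow] at h
  exact h

noncomputable def branchScale (μ : ℂ) (α : ℝ) (k : ℕ) : ℂ :=
  (((k : ℝ) ^ α : ℝ) : ℂ) * μ ^ k

theorem branchScale_ne_zero {μ : ℂ} (hμ : μ ≠ 0) (α : ℝ) {k : ℕ} (hk : k ≠ 0) :
    branchScale μ α k ≠ 0 :=
  mul_ne_zero (Complex.ofReal_ne_zero.2 (Real.rpow_pos_of_pos (by positivity) α).ne')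
    (pow_ne_zero k hμ)

theorem branchScale_succ (μ : ℂ) (α : ℝ) {k : ℕ} (hk : k ≠ 0) :
    branchScale μ α (k + 1) = μ * (((1 + (k : ℝ)⁻¹) ^ α : ℝ) : ℂ) * branchScale μ α k := by
  have hsplit : ((k + 1 : ℕ) : ℝ) = (1 + (k : ℝ)⁻¹) * k := by
    field_simp
    push_cast
    ring
  rw [branchScale, branchScale, hsplit, Real.mul_rpow (by positivity) (Nat.cast_nonneg k)]
  push_cast
  ring

theorem approxSpectralValue_eq_mul_branchScale_smul {N : ℕ} {μ : ℂ} (hμ : μ ≠ 0) (α : ℝ)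
    (u : ℕ → Fin N → ℂ) {k : ℕ} (hk : k ≠ 0) :
    approxSpectralValue (u k) (u (k + 1)) = μ * (((1 + (k : ℝ)⁻¹) ^ α : ℝ) : ℂ) *
      approxSpectralValue (branchScale μ α k • u k) (branchScale μ α (k + 1) • u (k + 1)) := by
  have hr : (((1 + (k : ℝ)⁻¹) ^ α : ℝ) : ℂ) ≠ 0 := Complex.ofReal_ne_zero.2 (by positivity)
  rw [approxSpectralValue_smul_smul, branchScale_succ μ α hk,
    div_mul_cancel_right₀ (branchScale_ne_zero hμ α hk), mul_inv_cancel_left₀ (mul_ne_zero hμ hr)]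

theorem eventually_hinner_succ_ne_zero {N : ℕ} {c : ℕ → ℂ} {u : ℕ → Fin N → ℂ}
    {w : Fin N → ℂ} (hw : w ≠ 0) (h : Tendsto (fun k => c k • u k) atTop (𝓝 w)) :
    ∀ᶠ k in atTop, hinner (u (k + 1)) (u k) ≠ 0 := by
  have hpair : Tendsto (fun k => (c (k + 1) • u (k + 1), c k • u k)) atTop (𝓝 (w, w)) :=
    (h.comp (tendsto_add_atTop_nat 1)).prodMk_nhds h
  filter_upwards [(continuous_hinner.tendsto (w, w)).comp hpair |>.eventually_ne
    (hinner_self_ne_zero hw)] with k hk h0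
  simp [hinner_smul_smul, h0] at hk

theorem approx_spectral_value_branch_point_asymptotics_general
    (N : ℕ) (μ₀ : ℂ) (hμ₀ : μ₀ ≠ 0) (α : ℝ)
    (w : Fin N → ℂ) (hw : w ≠ 0) (u : ℕ → Fin N → ℂ)
    (hasy : Tendsto
      (fun k : ℕ => (k : ℝ) * ‖((((k : ℝ) ^ α : ℝ) : ℂ) * μ₀ ^ k) • u k - w‖)
      atTop (nhds 0)) :
    (∃ K : ℕ, ∀ k ≥ K, hinner (u (k + 1)) (u k) ≠ 0) ∧
    Tendsto
      (fun k : ℕ =>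
        (k : ℂ) * (hinner (u k) (u k) / hinner (u (k + 1)) (u k) - μ₀))
      atTop (nhds ((α : ℂ) * μ₀)) := by
  set v : ℕ → Fin N → ℂ := fun k => branchScale μ₀ α k • u k
  have hv : (fun k => v k - w) =o[atTop] fun k : ℕ => (k : ℝ)⁻¹ :=
    isLittleO_natCast_inv_iff.2 hasy
  refine ⟨eventually_atTop.1 (eventually_hinner_succ_ne_zero hw
    (tendsto_sub_nhds_zero_iff.1 (hv.trans_tendsto tendsto_inv_atTop_nhds_zero_nat))), ?_⟩
  have hpair : (fun k => (v k, v (k + 1)) - (w, w)) =o[atTop] fun k : ℕ => (k : ℝ)⁻¹ :=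
    hv.prod_left hv.comp_add_one_natCast_inv
  have hq : Tendsto (fun k : ℕ => (k : ℂ) * (approxSpectralValue (v k) (v (k + 1)) - 1))
      atTop (𝓝 0) := by
    simpa only [approxSpectralValue_self hw] using
      ((differentiableAt_approxSpectralValue (hinner_self_ne_zero hw)).isLittleO_comp_sub hpair
        tendsto_inv_atTop_nhds_zero_nat).tendsto_natCast_mul
  have hlim := (tendsto_natCast_mul_mul_sub_one
    (tendsto_natCast_mul_one_add_inv_rpow_sub_one α) hq).const_mul μ₀
  rw [add_zero, mul_comm] at hlim
  refine hlim.congr' ?_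
  filter_upwards [eventually_ne_atTop 0] with k hk
  change _ = (k : ℂ) * (approxSpectralValue (u k) (u (k + 1)) - μ₀)
  rw [approxSpectralValue_eq_mul_branchScale_smul hμ₀ α u hk]
  ring

/-- If a sequence satisfies the pointwise asymptotics `u_k ≈ λ₀^{-k}·k^{-α}·w`
(with relative error `o(1/k)`), then the approximate spectral values
`λ_{0,k} = ⟨u_k,u_k⟩/⟨u_{k+1},u_k⟩` satisfy `k·(λ_{0,k} − λ₀) → α·λ₀`. -/
theorem approx_spectral_value_branch_point_asymptotics
    (N : ℕ) (μ₀ : ℂ) (hμ₀ : μ₀ ≠ 0) (α : ℝ) (hα : 0 < α)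
    (w : Fin N → ℂ) (hw : w ≠ 0) (u : ℕ → Fin N → ℂ)
    (hasy : Tendsto
      (fun k : ℕ => (k : ℝ) * ‖((((k : ℝ) ^ α : ℝ) : ℂ) * μ₀ ^ k) • u k - w‖)
      atTop (nhds 0)) :
    (∃ K : ℕ, ∀ k ≥ K, hinner (u (k + 1)) (u k) ≠ 0) ∧
    Tendsto
      (fun k : ℕ =>
        (k : ℂ) * (hinner (u k) (u k) / hinner (u (k + 1)) (u k) - μ₀))
      atTop (nhds ((α : ℂ) * μ₀)) :=
  approx_spectral_value_branch_point_asymptotics_general N μ₀ hμ₀ α w hw u hasy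
end
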